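/- arXiv:2509.04349 — 3 statements merged into one kernel-verified Lean document; each statement's English description precedes it below -/
import Mathlib

section
/- K_{1,w} ≥ √(1 − 1/(3w)) for every w ≥ 1, where K_{u,w} is the supremum of (∫_ℝ conj(Λ_u(x)) Λ_w(x) dx)^{1/2} over continuous positive definite Λ_u ∈ F_u, Λ_w ∈ F_w with Λ_u(0) = Λ_w(0) = 1. -/
open Complex MeasureTheory

/-- A function `Λ : ℝ → ℂ` is positive definite if for every finite collection of points
`x₁,…,x_t` and complex numbers `ξ₁,…,ξ_t`, the sum `∑_{j,k} Λ(x_j - x_k) ξ_j conj(ξ_k)`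
is a nonnegative real number. -/
def IsPosDefFn (Λ : ℝ → ℂ) : Prop :=
  ∀ (t : ℕ) (x : Fin t → ℝ) (ξ : Fin t → ℂ),
    0 ≤ (∑ j, ∑ k, Λ (x j - x k) * ξ j * (starRingEnd ℂ) (ξ k)).re ∧
    (∑ j, ∑ k, Λ (x j - x k) * ξ j * (starRingEnd ℂ) (ξ k)).im = 0

/-- The class `F_c` of continuous positive definite functions supported on `[-c, c]`
and normalized so that `Λ(0) = 1`. -/
def MemFclass (c : ℝ) (Λ : ℝ → ℂ) : Prop :=
  Continuous Λ ∧ IsPosDefFn Λ ∧ (∀ x : ℝ, x ∉ Set.Icc (-c) c → Λ x = 0) ∧ Λ 0 = 1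

/-- The constant `K_{u,w}`: the supremum of `(∫ conj(Λ_u(x)) Λ_w(x) dx)^{1/2}` over
`Λ_u ∈ F_u` and `Λ_w ∈ F_w`. -/
noncomputable def Kconst (u w : ℝ) : ℝ :=
  sSup {r : ℝ | ∃ Λ₁ Λ₂ : ℝ → ℂ, MemFclass u Λ₁ ∧ MemFclass w Λ₂ ∧
    r = Real.sqrt (∫ x : ℝ, ((starRingEnd ℂ) (Λ₁ x) * Λ₂ x).re)}

/-! Both triangle functions are admissible: `w · Λ_w(a - b)` is the length of
`(a, a + w] ∩ (b, b + w]`, so `Λ_w` is a Gram kernel of indicator functions and hence positive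
definite. Positive semidefiniteness of the `2 × 2` forms bounds every member of `F_c` by its value
`1` at `0`, so the set defining `K_{1,w}` is bounded above, and it contains
`(∫ Λ_1 Λ_w)^{1/2}`, where `∫ Λ_1 Λ_w = 2 ∫₀¹ (1 - x)(1 - x / w) dx = 1 - 1 / (3w)`. -/

theorem IsPosDefFn.ofReal_mul {Λ : ℝ → ℂ} (h : IsPosDefFn Λ) {c : ℝ} (hc : 0 ≤ c) :
    IsPosDefFn (fun x => c * Λ x) := by
  intro t x ξ
  have hsum : ∑ j, ∑ k, c * Λ (x j - x k) * ξ j * (starRingEnd ℂ) (ξ k)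
      = c * ∑ j, ∑ k, Λ (x j - x k) * ξ j * (starRingEnd ℂ) (ξ k) := by
    simp only [Finset.mul_sum, mul_assoc]
  obtain ⟨hre, him⟩ := h t x ξ
  rw [hsum, Complex.re_ofReal_mul, Complex.im_ofReal_mul, him, mul_zero]
  exact ⟨mul_nonneg hc hre, rfl⟩

/- The quadratic form of such a `Λ` is `∫ |∑ⱼ ξⱼ g(xⱼ, s)|² dμ(s)`. -/
theorem isPosDefFn_of_eq_integral_mul {α : Type*} [MeasurableSpace α] {μ : Measure α}
    {Λ : ℝ → ℂ} (g : ℝ → α → ℝ) (hg : ∀ a b, Integrable (fun s => g a s * g b s) μ)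
    (hΛ : ∀ a b, Λ (a - b) = ∫ s, g a s * g b s ∂μ) : IsPosDefFn Λ := by
  intro t x ξ
  set F : α → ℂ := fun s => ∑ j, ξ j * g (x j) s
  have hint : ∀ j k, Integrable
      (fun s => ξ j * (starRingEnd ℂ) (ξ k) * (g (x j) s * g (x k) s : ℝ)) μ :=
    fun j k => (hg (x j) (x k)).ofReal.const_mul _
  have hsum : ∑ j, ∑ k, Λ (x j - x k) * ξ j * (starRingEnd ℂ) (ξ k)
      = ((∫ s, Complex.normSq (F s) ∂μ : ℝ) : ℂ) := by
    calc ∑ j, ∑ k, Λ (x j - x k) * ξ j * (starRingEnd ℂ) (ξ k)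
        = ∑ j, ∑ k, ∫ s, ξ j * (starRingEnd ℂ) (ξ k) * (g (x j) s * g (x k) s : ℝ) ∂μ := by
          refine Finset.sum_congr rfl fun j _ => Finset.sum_congr rfl fun k _ => ?_
          rw [hΛ, integral_const_mul, integral_complex_ofReal]
          ring
      _ = ∑ j, ∫ s, ∑ k, ξ j * (starRingEnd ℂ) (ξ k) * (g (x j) s * g (x k) s : ℝ) ∂μ :=
          Finset.sum_congr rfl fun j _ => (integral_finsetSum _ fun k _ => hint j k).symm
      _ = ∫ s, ∑ j, ∑ k, ξ j * (starRingEnd ℂ) (ξ k) * (g (x j) s * g (x k) s : ℝ) ∂μ :=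
          (integral_finsetSum _ fun j _ => integrable_finsetSum _ fun k _ => hint j k).symm
      _ = ∫ s, F s * (starRingEnd ℂ) (F s) ∂μ := by
          congr 1 with s
          simp only [F, map_sum, map_mul, Complex.conj_ofReal, Finset.sum_mul_sum]
          push_cast
          exact Finset.sum_congr rfl fun j _ => Finset.sum_congr rfl fun k _ => by ring
      _ = _ := by simp_rw [Complex.mul_conj, integral_complex_ofReal]
  rw [hsum, Complex.ofReal_re, Complex.ofReal_im]
  exact ⟨integral_nonneg fun s => Complex.normSq_nonneg _, rfl⟩

theorem IsPosDefFn.re_nonneg_and_im_eq_zero_two_point {Λ : ℝ → ℂ} (h : IsPosDefFn Λ)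
    (h0 : Λ 0 = 1) (x : ℝ) (c : ℂ) :
    0 ≤ (1 + c * (starRingEnd ℂ) c + Λ x * c + Λ (-x) * (starRingEnd ℂ) c).re ∧
      (1 + c * (starRingEnd ℂ) c + Λ x * c + Λ (-x) * (starRingEnd ℂ) c).im = 0 := by
  have hform : ∑ j, ∑ k, Λ (![x, 0] j - ![x, 0] k) * ![c, 1] j * (starRingEnd ℂ) (![c, 1] k)
      = 1 + c * (starRingEnd ℂ) c + Λ x * c + Λ (-x) * (starRingEnd ℂ) c := by
    simp only [Fin.sum_univ_two, Matrix.cons_val_zero, Matrix.cons_val_one, sub_self,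
      sub_zero, zero_sub, h0, one_mul, mul_one, map_one]
    ring
  rw [← hform]
  exact h 2 ![x, 0] ![c, 1]

theorem IsPosDefFn.apply_neg {Λ : ℝ → ℂ} (h : IsPosDefFn Λ) (h0 : Λ 0 = 1) (x : ℝ) :
    Λ (-x) = (starRingEnd ℂ) (Λ x) := by
  have h1 := (h.re_nonneg_and_im_eq_zero_two_point h0 x 1).2
  have hI := (h.re_nonneg_and_im_eq_zero_two_point h0 x Complex.I).2
  simp only [map_one, mul_one, Complex.add_im, Complex.one_im, Complex.mul_im, Complex.conj_I,
    Complex.I_re, Complex.I_im, Complex.neg_im, mul_neg] at h1 hI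
  apply Complex.ext <;> simp only [Complex.conj_re, Complex.conj_im] <;> linarith

theorem IsPosDefFn.norm_le_one {Λ : ℝ → ℂ} (h : IsPosDefFn Λ) (h0 : Λ 0 = 1) (x : ℝ) :
    ‖Λ x‖ ≤ 1 := by
  have hform := (h.re_nonneg_and_im_eq_zero_two_point h0 x (-(starRingEnd ℂ) (Λ x))).1
  rw [h.apply_neg h0 x] at hform
  have hq : 1 + -(starRingEnd ℂ) (Λ x) * (starRingEnd ℂ) (-(starRingEnd ℂ) (Λ x))
      + Λ x * -(starRingEnd ℂ) (Λ x)
      + (starRingEnd ℂ) (Λ x) * (starRingEnd ℂ) (-(starRingEnd ℂ) (Λ x))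
      = ((1 - ‖Λ x‖ ^ 2 : ℝ) : ℂ) := by
    simp only [map_neg, Complex.conj_conj]
    push_cast
    linear_combination -Complex.mul_conj' (Λ x)
  rw [hq, Complex.ofReal_re] at hform
  nlinarith [norm_nonneg (Λ x)]

theorem MemFclass.integral_re_conj_mul_le {u w : ℝ} {Λ₁ Λ₂ : ℝ → ℂ} (h₁ : MemFclass u Λ₁)
    (h₂ : MemFclass w Λ₂) :
    ∫ x, ((starRingEnd ℂ) (Λ₁ x) * Λ₂ x).re ≤ volume.real (Set.Icc (-u) u) := by
  have hnorm : ∀ x, ‖((starRingEnd ℂ) (Λ₁ x) * Λ₂ x).re‖ ≤ 1 := fun x =>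
    calc ‖((starRingEnd ℂ) (Λ₁ x) * Λ₂ x).re‖ ≤ ‖Λ₁ x‖ * ‖Λ₂ x‖ := by
          rw [← Complex.norm_conj (Λ₁ x), ← norm_mul]
          exact Complex.abs_re_le_norm _
      _ ≤ 1 := mul_le_one₀ (h₁.2.1.norm_le_one h₁.2.2.2 x) (norm_nonneg _)
          (h₂.2.1.norm_le_one h₂.2.2.2 x)
  rw [← setIntegral_eq_integral_of_forall_compl_eq_zero fun x hx => by simp [h₁.2.2.1 x hx]]
  calc _ ≤ ‖∫ x in Set.Icc (-u) u, ((starRingEnd ℂ) (Λ₁ x) * Λ₂ x).re‖ := Real.le_norm_self _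
    _ ≤ 1 * volume.real (Set.Icc (-u) u) :=
        norm_setIntegral_le_of_norm_le_const measure_Icc_lt_top fun x _ => hnorm x
    _ = _ := one_mul _

theorem sqrt_integral_le_Kconst {u w : ℝ} {Λ₁ Λ₂ : ℝ → ℂ} (h₁ : MemFclass u Λ₁)
    (h₂ : MemFclass w Λ₂) :
    Real.sqrt (∫ x, ((starRingEnd ℂ) (Λ₁ x) * Λ₂ x).re) ≤ Kconst u w := by
  refine le_csSup ⟨Real.sqrt (volume.real (Set.Icc (-u) u)), ?_⟩ ⟨Λ₁, Λ₂, h₁, h₂, rfl⟩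
  rintro r ⟨Λ₁, Λ₂, h₁, h₂, rfl⟩
  exact Real.sqrt_le_sqrt (h₁.integral_re_conj_mul_le h₂)

noncomputable def tent (w x : ℝ) : ℝ := max (1 - |x| / w) 0

theorem tent_eq_inv_mul (w x : ℝ) (hw : 0 < w) : tent w x = w⁻¹ * max (w - |x|) 0 := by
  rw [tent, mul_max_of_nonneg _ _ (inv_nonneg.2 hw.le), mul_zero, mul_sub,
    inv_mul_cancel₀ hw.ne', inv_mul_eq_div]

theorem tent_eq_zero_of_lt_abs {w x : ℝ} (hw : 0 < w) (hx : w < |x|) : tent w x = 0 := by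
  rw [tent_eq_inv_mul w x hw, max_eq_right (by linarith), mul_zero]

theorem integral_indicator_Ioc_mul_indicator_Ioc (w a b : ℝ) :
    ∫ s, (Set.Ioc a (a + w)).indicator 1 s * (Set.Ioc b (b + w)).indicator (1 : ℝ → ℝ) s
      = max (w - |a - b|) 0 := by
  simp_rw [← Set.inter_indicator_mul, Pi.one_apply, one_mul]
  rw [integral_indicator_const _ (measurableSet_Ioc.inter measurableSet_Ioc), Set.Ioc_inter_Ioc,
    Real.volume_real_Ioc, min_add_add_right, ← max_sub_min_eq_abs', smul_eq_mul, mul_one]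
  congr 1
  ring

theorem integrable_indicator_Ioc_mul_indicator_Ioc (w a b : ℝ) :
    Integrable fun s =>
      (Set.Ioc a (a + w)).indicator 1 s * (Set.Ioc b (b + w)).indicator (1 : ℝ → ℝ) s := by
  simp_rw [← Set.inter_indicator_mul, Pi.one_apply, one_mul]
  exact (integrableOn_const (measure_mono Set.inter_subset_left |>.trans_lt
    measure_Ioc_lt_top).ne).integrable_indicator (measurableSet_Ioc.inter measurableSet_Ioc)

theorem isPosDefFn_tent {w : ℝ} (hw : 0 < w) : IsPosDefFn fun x => (tent w x : ℂ) := by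
  have hoverlap : IsPosDefFn fun x => ((max (w - |x|) 0 : ℝ) : ℂ) :=
    isPosDefFn_of_eq_integral_mul (fun a => (Set.Ioc a (a + w)).indicator 1)
      (integrable_indicator_Ioc_mul_indicator_Ioc w) fun a b => by
        rw [integral_indicator_Ioc_mul_indicator_Ioc]
  convert hoverlap.ofReal_mul (inv_nonneg.2 hw.le) using 2 with x
  rw [tent_eq_inv_mul w x hw, Complex.ofReal_mul]

theorem tent_mem_Fclass {w : ℝ} (hw : 0 < w) : MemFclass w fun x => (tent w x : ℂ) := by
  refine ⟨by unfold tent; fun_prop, isPosDefFn_tent hw, fun x hx => ?_, by simp [tent]⟩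
  dsimp only
  rw [tent_eq_zero_of_lt_abs hw (lt_abs.2 ?_), Complex.ofReal_zero]
  simp only [Set.mem_Icc, not_and_or, not_le] at hx
  exact hx.symm.imp id fun h => by linarith

theorem integral_sub_mul_sub_div (w : ℝ) (hw : 0 < w) :
    ∫ x in (0 : ℝ)..1, (1 - x) * (1 - x / w) = 1 / 2 - 1 / (6 * w) := by
  have hderiv : ∀ x : ℝ, HasDerivAt (fun x => x - (1 + w⁻¹) * x ^ 2 / 2 + w⁻¹ * x ^ 3 / 3)
      ((1 - x) * (1 - x / w)) x := fun x =>
    (((hasDerivAt_id' x).sub (((hasDerivAt_pow 2 x).const_mul (1 + w⁻¹)).div_const 2)).add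
      (((hasDerivAt_pow 3 x).const_mul w⁻¹).div_const 3)).congr_deriv (by field_simp; ring)
  rw [intervalIntegral.integral_eq_sub_of_hasDerivAt (fun x _ => hderiv x)
    (by apply Continuous.intervalIntegrable; fun_prop)]
  field_simp
  ring

theorem integral_tent_one_mul_tent {w : ℝ} (hw : 1 ≤ w) :
    ∫ x, tent 1 x * tent w x = 1 - 1 / (3 * w) := by
  have hw0 : 0 < w := one_pos.trans_le hw
  set f : ℝ → ℝ := fun y => max (1 - y) 0 * max (1 - y / w) 0
  have hf : ∀ y ∈ Set.uIcc (0 : ℝ) 1, f y = (1 - y) * (1 - y / w) := fun y hy => by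
    rw [Set.uIcc_of_le zero_le_one] at hy
    have : y / w ≤ 1 := (div_le_one hw0).2 (hy.2.trans hw)
    simp only [f, max_eq_left (sub_nonneg.2 hy.2), max_eq_left (sub_nonneg.2 this)]
  calc ∫ x, tent 1 x * tent w x = ∫ x, f |x| := by simp only [tent, div_one, f]
    _ = 2 * ∫ x in Set.Ioi 0, f x := integral_comp_abs
    _ = 2 * ∫ x in (0 : ℝ)..1, f x := by
        rw [intervalIntegral.integral_of_le zero_le_one,
          setIntegral_eq_of_subset_of_forall_sdiff_eq_zero measurableSet_Ioi Set.Ioc_subset_Ioi_self]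
        rintro x ⟨hx0, hx⟩
        have hx1 : 1 - x ≤ 0 := by
          simp only [Set.mem_Ioi, Set.mem_Ioc, not_and, not_le] at hx0 hx
          linarith [hx hx0]
        simp only [f, max_eq_right hx1, zero_mul]
    _ = 2 * ∫ x in (0 : ℝ)..1, (1 - x) * (1 - x / w) := by
        rw [intervalIntegral.integral_congr hf]
    _ = 1 - 1 / (3 * w) := by
        rw [integral_sub_mul_sub_div w hw0]
        ring

theorem Kconst_one_lower_bound (w : ℝ) (hw : 1 ≤ w) :
    Kconst 1 w ≥ Real.sqrt (1 - 1 / (3 * w)) := by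
  have h := sqrt_integral_le_Kconst (tent_mem_Fclass one_pos) (tent_mem_Fclass (one_pos.trans_le hw))
  simp only [Complex.conj_ofReal, ← Complex.ofReal_mul, Complex.ofReal_re,
    integral_tent_one_mul_tent hw] at h
  exact h
end

section
/- For all integers 0 ≤ k, l ≤ N−1 with |k−l| < N/2 and all 1 ≤ r ≤ N−1, |(P_{r,N})_{kl} − Π_{r/N}(k,l)| < 2/N, where (P_{r,N})_{kl} = (1/N)∑_{j=0}^{r−1} e^{2πi(l−k)j/N} and Π_{r/N}(k,l) = r/N when k=l and (e^{2πi(l−k)r/N} − 1)/(2πi(l−k)) when k≠l. -/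
open Complex MeasureTheory

/-- The entries of the projection matrix `P_{r,N}`:
`(P_{r,N})_{kl} = (1/N) ∑_{j=0}^{r-1} e^{2πi (l-k) j / N}`. -/
noncomputable def Pentry (N r : ℕ) (k l : ℕ) : ℂ :=
  (1 / N) * ∑ j ∈ Finset.range r,
    Complex.exp (2 * Real.pi * Complex.I * ((l : ℤ) - (k : ℤ)) * j / N)

/-- The entries of the limiting operator `Π_{r/N}`:
`Π_{r/N}(k,l) = r/N` if `k = l` and `(e^{2πi(l-k)r/N} - 1)/(2πi(l-k))` otherwise. -/
noncomputable def PiEntry (r N : ℕ) (k l : ℤ) : ℂ :=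
  if k = l then (r : ℂ) / N
  else (Complex.exp (2 * Real.pi * Complex.I * ((l : ℂ) - (k : ℂ)) * r / N) - 1) /
    (2 * Real.pi * Complex.I * ((l : ℂ) - (k : ℂ)))

/-! With `y = π (l - k) / N` and `ω = e^{2iy}`, the geometric sum gives
`P_{kl} = (ω^r - 1) / (N (ω - 1))`, while `Π(k, l) = (ω^r - 1) / (N · 2iy)`. The difference is
`(ω^r - 1) / N` times `(ω - 1)⁻¹ - (2iy)⁻¹ = -1/2 + i (1 - y cot y) / (2y)`.
For `0 < |y| < π/2` the bound `0 < 1 - y cot y < y² / 2` puts the imaginary part below `π / 8`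
in absolute value, so this factor has modulus `< 1`, while `|ω^r - 1| ≤ 2`. -/

namespace Real

lemma one_sub_sq_div_two_lt_mul_cot {y : ℝ} (hy0 : 0 < y) (hy : y < π / 2) :
    1 - y ^ 2 / 2 < y * cot y := by
  have hsin : 0 < sin y := sin_pos_of_pos_of_lt_pi hy0 (by linarith [pi_pos])
  have hcos : 0 < cos y := cos_pos_of_mem_Ioo ⟨by linarith, hy⟩
  rw [cot_eq_cos_div_sin, ← mul_div_assoc, lt_div_iff₀ hsin]
  rcases le_or_gt (1 - y ^ 2 / 2) 0 with h | h
  · nlinarith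
  · nlinarith [sin_lt hy0, one_sub_sq_div_two_le_cos (x := y)]

lemma mul_cot_lt_one {y : ℝ} (hy0 : 0 < y) (hy : y < π / 2) : y * cot y < 1 := by
  have hsin : 0 < sin y := sin_pos_of_pos_of_lt_pi hy0 (by linarith [pi_pos])
  have hcos : 0 < cos y := cos_pos_of_mem_Ioo ⟨by linarith, hy⟩
  have htan := lt_tan hy0 hy
  rw [tan_eq_sin_div_cos, lt_div_iff₀ hcos] at htan
  rw [cot_eq_cos_div_sin, ← mul_div_assoc, div_lt_one hsin]
  exact htan

lemma abs_one_sub_mul_cot_lt {y : ℝ} (hy0 : y ≠ 0) (hy : |y| < π / 2) :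
    |1 - y * cot y| < y ^ 2 / 2 := by
  have heven : |y| * cot |y| = y * cot y := by
    rcases abs_choice y with h | h <;> rw [h]
    simp [cot_eq_cos_div_sin, div_neg]
  rw [← heven, ← sq_abs y, abs_lt]
  have hpos := abs_pos.mpr hy0
  constructor
  · linarith [mul_cot_lt_one hpos hy, sq_nonneg |y|]
  · linarith [one_sub_sq_div_two_lt_mul_cot hpos hy]

end Real

namespace Complex

lemma exp_two_mul_I_ne_one {y : ℝ} (hy0 : y ≠ 0) (hy : |y| < Real.pi) :
    exp (2 * I * y) ≠ 1 := by
  rw [Ne, exp_eq_one_iff]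
  rintro ⟨n, hn⟩
  have hyn : y = n * Real.pi := by
    have := congrArg im hn
    simp at this
    linarith
  have hn0 : n ≠ 0 := by rintro rfl; simp_all
  have : (1 : ℝ) ≤ |(n : ℝ)| := by exact_mod_cast Int.one_le_abs hn0
  rw [hyn, abs_mul, abs_of_pos Real.pi_pos] at hy
  nlinarith [Real.pi_pos]

lemma inv_exp_two_mul_I_sub_one {z : ℂ} (hz : exp (2 * I * z) ≠ 1) :
    (exp (2 * I * z) - 1)⁻¹ = -1 / 2 - I * cot z / 2 := by
  have h1 : exp (2 * I * z) - 1 ≠ 0 := sub_ne_zero.mpr hz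
  have h2 : 1 - exp (2 * I * z) ≠ 0 := sub_ne_zero.mpr hz.symm
  rw [cot_eq_exp_ratio]
  field_simp
  ring

lemma norm_inv_exp_two_mul_I_sub_one_sub_inv_lt_one {y : ℝ} (hy0 : y ≠ 0)
    (hy : |y| < Real.pi / 2) : ‖(exp (2 * I * y) - 1)⁻¹ - (2 * I * y)⁻¹‖ < 1 := by
  have hexp := exp_two_mul_I_ne_one hy0 (by linarith [Real.pi_pos])
  have hyC : (y : ℂ) ≠ 0 := ofReal_ne_zero.mpr hy0
  set t := (1 - y * Real.cot y) / (2 * y)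
  have hform :
      (exp (2 * I * y) - 1)⁻¹ - (2 * I * y)⁻¹ = ((-1 / 2 : ℝ) : ℂ) + (t : ℂ) * I := by
    rw [inv_exp_two_mul_I_sub_one hexp]
    simp only [t]
    push_cast
    field_simp
    linear_combination -I_sq
  have ht : |t| < Real.pi / 8 := by
    have hpos : 0 < 2 * |y| := by positivity
    rw [abs_div, abs_mul, abs_two, div_lt_iff₀ hpos]
    nlinarith [Real.abs_one_sub_mul_cot_lt hy0 hy, sq_abs y]
  rw [hform, norm_add_mul_I, Real.sqrt_lt' one_pos]
  nlinarith [Real.pi_lt_d2, abs_nonneg t, sq_abs t]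

end Complex

lemma Pentry_self (N r k : ℕ) : Pentry N r k k = r / N := by
  simp [Pentry, div_eq_inv_mul]

lemma PiEntry_self (r N : ℕ) (k : ℤ) : PiEntry r N k k = r / N := if_pos rfl

lemma Pentry_eq_geom_sum (N r k l : ℕ) :
    Pentry N r k l =
      (∑ j ∈ Finset.range r,
        exp (2 * I * (Real.pi * ((l : ℤ) - (k : ℤ)) / N : ℝ)) ^ j) / N := by
  rw [Pentry, one_div, inv_mul_eq_div]
  congr 1
  refine Finset.sum_congr rfl fun j _ => ?_
  rw [← exp_nat_mul]
  push_cast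
  ring_nf

lemma PiEntry_of_ne {N : ℕ} (hN : N ≠ 0) (r : ℕ) {k l : ℤ} (hkl : k ≠ l) :
    PiEntry r N k l =
      (exp (2 * I * (Real.pi * (l - k) / N : ℝ)) ^ r - 1) /
        (N * (2 * I * (Real.pi * (l - k) / N : ℝ))) := by
  have hNC : (N : ℂ) ≠ 0 := Nat.cast_ne_zero.mpr hN
  rw [PiEntry, if_neg hkl, ← exp_nat_mul]
  push_cast
  congr 1
  · ring_nf
  · field_simp

theorem Pentry_close_to_PiEntry_general (N r : ℕ) (k l : ℕ)
    (hkl : (|(k : ℤ) - (l : ℤ)| : ℝ) < N / 2) :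
    ‖Pentry N r k l - PiEntry r N (k : ℤ) (l : ℤ)‖ < 2 / N := by
  have hN : (0 : ℝ) < N := by linarith [abs_nonneg (((k : ℤ) : ℝ) - (l : ℤ))]
  obtain rfl | hne := eq_or_ne k l
  · rw [Pentry_self, PiEntry_self, sub_self, norm_zero]
    positivity
  rw [Pentry_eq_geom_sum, PiEntry_of_ne (by exact_mod_cast hN.ne') r (by exact_mod_cast hne)]
  set y : ℝ := Real.pi * ((l : ℤ) - (k : ℤ)) / N
  have hy0 : y ≠ 0 := by simp [y, Real.pi_ne_zero, hN.ne', sub_eq_zero, hne.symm]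
  have hy : |y| < Real.pi / 2 := by
    rw [abs_div, abs_mul, abs_of_pos Real.pi_pos, abs_of_pos hN, div_lt_iff₀ hN, abs_sub_comm]
    push_cast at hkl ⊢
    nlinarith [Real.pi_pos]
  have hω := exp_two_mul_I_ne_one hy0 (by linarith [Real.pi_pos])
  have hnorm : ‖exp (2 * I * y) ^ r - 1‖ ≤ 2 :=
    (norm_sub_le _ _).trans_eq (by simp [norm_exp]; norm_num)
  rw [geom_sum_eq hω]
  set ω := exp (2 * I * y)
  calc _ = ‖(ω ^ r - 1) / N * ((ω - 1)⁻¹ - (2 * I * y)⁻¹)‖ := by ring_nf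
    _ = ‖ω ^ r - 1‖ / N * ‖(ω - 1)⁻¹ - (2 * I * y)⁻¹‖ := by
        rw [norm_mul, norm_div, norm_natCast]
    _ ≤ 2 / N * ‖(ω - 1)⁻¹ - (2 * I * y)⁻¹‖ := by gcongr
    _ < 2 / N * 1 := by
        gcongr
        exact norm_inv_exp_two_mul_I_sub_one_sub_inv_lt_one hy0 hy
    _ = 2 / N := mul_one _

theorem Pentry_close_to_PiEntry (N r : ℕ) (hN : 1 ≤ N) (hr1 : 1 ≤ r) (hr2 : r ≤ N - 1)
    (k l : ℕ) (hk : k ≤ N - 1) (hl : l ≤ N - 1)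
    (hkl : (|(k : ℤ) - (l : ℤ)| : ℝ) < N / 2) :
    ‖Pentry N r k l - PiEntry r N (k : ℤ) (l : ℤ)‖ < 2 / N :=
  Pentry_close_to_PiEntry_general N r k l hkl
end

section
/- Let {α_j}_{j∈ℤ} and {γ_j}_{j∈ℤ} be real, symmetric, nonnegative sequences with α_0 = γ_0 = 1, satisfying 1 = α_0 ≥ α_1 ≥ ⋯ ≥ α_{p−1} ≥ 0, α_j = 0 for j ≥ p, and 1 = γ_0 ≥ γ_1 ≥ ⋯ ≥ γ_{n−1} ≥ 0, γ_j = 0 for j ≥ n. Then ∑_{j∈ℤ} α_j γ_j − (1/3)∑_{j∈ℤ}(α_j γ_j + (1/2)α_j γ_{j+1} + (1/2)α_{j+1}γ_j + α_{j+1}γ_{j+1}) ≤ 1/3. -/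
/-! With `A = ∑ α_j γ_j` and `C = ∑ α_j γ_{j+1}`, evenness and the reindexing `j ↦ -1 - j`
turn the second sum into `2A + C`, so the claim is `A - C ≤ 1`. Folding the sum over `ℤ` onto `ℕ`
gives `A - C = ∑_{n ≥ 0} (α_n - α_{n+1}) (γ_n - γ_{n+1})`; here `0 ≤ γ_n - γ_{n+1} ≤ γ_0 = 1`,
while the nonnegative differences `α_n - α_{n+1}` telescope to `α_0 = 1`. -/

open Finset Function

section

variable {R : Type*} {α γ : ℤ → R}

theorem hasFiniteSupport_of_even_of_eq_zero [Zero R] (hα : α.Even) {p : ℤ}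
    (hαzero : ∀ j, p ≤ j → α j = 0) : α.HasFiniteSupport := by
  refine (Set.finite_Ioo (-p) p).subset fun j hj => ⟨?_, ?_⟩ <;> by_contra! h
  · exact hj (hα j ▸ hαzero (-j) (by omega))
  · exact hj (hαzero j h)

theorem tsum_comp_add_one_mul_eq [NonUnitalNonAssocSemiring R] [TopologicalSpace R]
    (hα : α.Even) (hγ : γ.Even) :
    ∑' j, α (j + 1) * γ j = ∑' j, α j * γ (j + 1) := by
  rw [← (Equiv.subLeft (-1 : ℤ)).tsum_eq]
  congr 1 with j
  rw [Equiv.subLeft_apply, show -1 - j + 1 = -j by ring, show -1 - j = -(j + 1) by ring, hα, hγ]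

theorem tsum_mul_sub_tsum_mul_comp_add_one [CommRing R] [TopologicalSpace R]
    [IsTopologicalAddGroup R] [T2Space R] (hα : α.Even) (hγ : γ.Even)
    (hαfin : α.HasFiniteSupport) :
    ∑' j, α j * γ j - ∑' j, α j * γ (j + 1) =
      ∑' n : ℕ, (α n - α (n + 1)) * (γ n - γ (n + 1)) := by
  rw [← (summable_of_hasFiniteSupport (by fun_prop)).tsum_sub
    (summable_of_hasFiniteSupport (by fun_prop)),
    ← tsum_nat_add_neg_add_one (summable_of_hasFiniteSupport (by fun_prop))]
  congr 1 with n
  rw [show -((n : ℤ) + 1) + 1 = -n by ring, hα, hγ, hγ]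
  ring

theorem tsum_symmetrized_mul_eq [Field R] [CharZero R] [TopologicalSpace R] [IsTopologicalRing R]
    [T2Space R] (hα : α.Even) (hγ : γ.Even) (hαfin : α.HasFiniteSupport) :
    ∑' j, (α j * γ j + (1 / 2) * α j * γ (j + 1) + (1 / 2) * α (j + 1) * γ j +
        α (j + 1) * γ (j + 1)) =
      2 * ∑' j, α j * γ j + ∑' j, α j * γ (j + 1) := by
  have hshift := (Equiv.addRight (1 : ℤ)).tsum_eq fun j => α j * γ j
  simp only [Equiv.coe_addRight] at hshift
  simp_rw [mul_assoc (1 / 2 : R)]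
  rw [Summable.tsum_add, Summable.tsum_add, Summable.tsum_add, tsum_mul_left, tsum_mul_left,
    tsum_comp_add_one_mul_eq hα hγ, hshift]
  · field_simp; ring
  all_goals exact summable_of_hasFiniteSupport (by fun_prop (disch := exact add_left_injective _))

end

theorem tsum_sub_succ_mul_sub_succ_le {a b : ℕ → ℝ} {p : ℕ} (ha : Antitone a)
    (hazero : ∀ n, p ≤ n → a n = 0) (hb : Antitone b) (hbnn : ∀ n, 0 ≤ b n) :
    ∑' n, (a n - a (n + 1)) * (b n - b (n + 1)) ≤ a 0 * b 0 := by
  rw [tsum_eq_sum (s := range p) fun n hn => by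
    rw [hazero n (by simpa using hn), hazero (n + 1) (by simp at hn; omega), sub_self, zero_mul]]
  calc ∑ n ∈ range p, (a n - a (n + 1)) * (b n - b (n + 1))
      ≤ ∑ n ∈ range p, (a n - a (n + 1)) * b 0 := by
        refine sum_le_sum fun n _ => mul_le_mul_of_nonneg_left ?_ (sub_nonneg.2 (ha n.le_succ))
        linarith [hbnn (n + 1), hb n.zero_le]
    _ = a 0 * b 0 := by rw [← sum_mul, sum_range_sub', hazero p le_rfl, sub_zero]

theorem monotone_sequence_gap_bound_general (p : ℕ)
    (α γ : ℤ → ℝ)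
    (hα0 : α 0 = 1) (hγ0 : γ 0 = 1)
    (hαsymm : ∀ j : ℤ, α (-j) = α j) (hγsymm : ∀ j : ℤ, γ (-j) = γ j)
    (hγnn : ∀ j : ℕ, 0 ≤ γ (j : ℤ))
    (hαmono : ∀ j : ℕ, α ((j : ℤ) + 1) ≤ α (j : ℤ))
    (hγmono : ∀ j : ℕ, γ ((j : ℤ) + 1) ≤ γ (j : ℤ))
    (hαzero : ∀ j : ℤ, (p : ℤ) ≤ j → α j = 0) :
    (∑' j : ℤ, α j * γ j) -
      (1 / 3) * ∑' j : ℤ, (α j * γ j + (1 / 2) * α j * γ (j + 1) +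
        (1 / 2) * α (j + 1) * γ j + α (j + 1) * γ (j + 1)) ≤ 1 / 3 := by
  have hαfin := hasFiniteSupport_of_even_of_eq_zero hαsymm hαzero
  have hgap := tsum_mul_sub_tsum_mul_comp_add_one hαsymm hγsymm hαfin
  have hbound := tsum_sub_succ_mul_sub_succ_le (a := fun n : ℕ => α n) (b := fun n : ℕ => γ n)
    (antitone_nat_of_succ_le fun j => by exact_mod_cast hαmono j)
    (fun j hj => hαzero j (by exact_mod_cast hj))
    (antitone_nat_of_succ_le fun j => by exact_mod_cast hγmono j) hγnn
  push_cast [hα0, hγ0] at hbound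
  rw [tsum_symmetrized_mul_eq hαsymm hγsymm hαfin]
  linarith

theorem monotone_sequence_gap_bound (p n : ℕ) (hp : 0 < p) (hn : 0 < n)
    (α γ : ℤ → ℝ)
    (hα0 : α 0 = 1) (hγ0 : γ 0 = 1)
    (hαsymm : ∀ j : ℤ, α (-j) = α j) (hγsymm : ∀ j : ℤ, γ (-j) = γ j)
    (hαnn : ∀ j : ℕ, 0 ≤ α (j : ℤ)) (hγnn : ∀ j : ℕ, 0 ≤ γ (j : ℤ))
    (hαmono : ∀ j : ℕ, α ((j : ℤ) + 1) ≤ α (j : ℤ))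
    (hγmono : ∀ j : ℕ, γ ((j : ℤ) + 1) ≤ γ (j : ℤ))
    (hαzero : ∀ j : ℤ, (p : ℤ) ≤ j → α j = 0)
    (hγzero : ∀ j : ℤ, (n : ℤ) ≤ j → γ j = 0) :
    (∑' j : ℤ, α j * γ j) -
      (1 / 3) * ∑' j : ℤ, (α j * γ j + (1 / 2) * α j * γ (j + 1) +
        (1 / 2) * α (j + 1) * γ j + α (j + 1) * γ (j + 1)) ≤ 1 / 3 :=
  monotone_sequence_gap_bound_general p α γ hα0 hγ0 hαsymm hγsymm hγnn hαmono hγmono hαzero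
end
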